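/- Let h = (h_k)_{k∈ℤ} be a reduced homology theory on pointed CW complexes: each h_k is a functor to abelian groups sending pointed-homotopic maps to equal homomorphisms, and for every CW pair (X, A) there is an exact sequence h_k(A) → h_k(X) → h_k(X/A) → h_{k−1}(A) → h_{k−1}(X), natural in the pair, in which the maps h_k(A) → h_k(X) and h_{k−1}(A) → h_{k−1}(X) are induced by the inclusion A ⊆ X and the map h_k(X) → h_k(X/A) is induced by the quotient map. Suppose a pointed CW complex X has the 1-Step Stabilization property for h, i.e., for all k and all m ≥ 0 the kernel of h_k(X^{(m)}) → h_k(X^{(m+1)}) equals the kernel of h_k(X^{(m)}) → h_k(X) (maps induced by the skeleton inclusions). Then for every n, the quotient complex Y = X/X^{(n)} — with the CW structure whose m-skeleton is Y^{(m)} = X^{(m)}/X^{(n)} for m ≥ n — also has the 1-Step Stabilization property for h. -/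

import Mathlib

noncomputable section

/-! ## Pointed spaces and pointed maps -/

/-- A pointed topological space. -/
structure PtSp : Type 1 where
  /-- underlying type -/
  carrier : Type
  /-- topology -/
  [topInst : TopologicalSpace carrier]
  /-- basepoint -/
  pt : carrier

attribute [instance] PtSp.topInst

/-- A pointed continuous map. -/
@[ext] structure PtMap (X Y : PtSp) where
  toFun : X.carrier → Y.carrier
  continuous : Continuous toFun
  map_pt : toFun X.pt = Y.pt

/-- identity pointed map -/
def PtMap.id (X : PtSp) : PtMap X X := ⟨fun x => x, continuous_id, rfl⟩

/-- composition of pointed maps -/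
def PtMap.comp {X Y Z : PtSp} (g : PtMap Y Z) (f : PtMap X Y) : PtMap X Z :=
  ⟨g.toFun ∘ f.toFun, g.continuous.comp f.continuous, by
    simp [Function.comp, f.map_pt, g.map_pt]⟩

/-- constant pointed map -/
def PtMap.const (X Y : PtSp) : PtMap X Y := ⟨fun _ => Y.pt, continuous_const, rfl⟩

/-- underlying continuous map of a pointed map -/
def PtMap.toCM {X Y : PtSp} (f : PtMap X Y) : C(X.carrier, Y.carrier) := ⟨f.toFun, f.continuous⟩

/-- Pointed homotopy: homotopy relative to the basepoint. -/
def PtHomotopic {X Y : PtSp} (f g : PtMap X Y) : Prop :=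
  Nonempty (ContinuousMap.HomotopyRel f.toCM g.toCM {X.pt})

/-- Pointed homotopy equivalence of pointed spaces: pointed maps in both directions whose
composites are pointed-homotopic to the identities. -/
def PtHtpyEquiv (X Y : PtSp) : Prop :=
  ∃ (f : PtMap X Y) (g : PtMap Y X),
    PtHomotopic (g.comp f) (PtMap.id X) ∧ PtHomotopic (f.comp g) (PtMap.id Y)

/-! ## Wedge sums -/

/-- The relation generating the wedge: every basepoint is glued to an auxiliary point. -/
def wedgeRel {J : Type} (X : J → PtSp) :
    ((Σ j, (X j).carrier) ⊕ Unit) → ((Σ j, (X j).carrier) ⊕ Unit) → Prop :=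
  fun a b => (∃ j, a = Sum.inl ⟨j, (X j).pt⟩) ∧ b = Sum.inr ()

/-- The wedge sum `⋁ⱼ Xⱼ` of a family of pointed spaces: the quotient of the disjoint union
identifying all the basepoints (an auxiliary point is used so that this also makes sense for an
empty family, where the wedge is a single point). -/
def Wedge {J : Type} (X : J → PtSp) : PtSp where
  carrier := Quotient (Relation.EqvGen.setoid (wedgeRel X))
  pt := Quotient.mk _ (Sum.inr ())

/-- inclusion of a wedge summand -/
def wedgeIncl {J : Type} (X : J → PtSp) (j : J) : PtMap (X j) (Wedge X) where
  toFun x := Quotient.mk _ (Sum.inl ⟨j, x⟩)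
  continuous := continuous_quotient_mk'.comp (continuous_inl.comp continuous_sigmaMk)
  map_pt := Quotient.sound (Relation.EqvGen.rel _ _ ⟨⟨j, rfl⟩, rfl⟩)

/-- The map collapsing all wedge summands but the `i`-th one to the basepoint
(for a constant family). -/
def wedgeProj {J : Type} [DecidableEq J] (Y : PtSp) (i : J) :
    PtMap (Wedge (fun _ : J => Y)) Y where
  toFun := Quotient.lift
    (fun a => Sum.elim (fun p : Σ _ : J, Y.carrier => if p.1 = i then p.2 else Y.pt)
      (fun _ => Y.pt) a)
    (by
      intro a b h
      induction h with
      | rel a b hab =>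
        obtain ⟨⟨j, ha⟩, hb⟩ := hab
        subst ha; subst hb
        by_cases h : j = i <;> simp [h]
      | refl a => rfl
      | symm _ _ _ ih => exact ih.symm
      | trans _ _ _ _ _ ih₁ ih₂ => exact ih₁.trans ih₂)
  continuous := by
    apply Continuous.quotient_lift
    apply Continuous.sumElim _ continuous_const
    apply continuous_sigma
    intro j
    by_cases h : j = i <;> simp [h] <;> [exact continuous_id; exact continuous_const]
  map_pt := rfl

/-! ## Smash products, spheres, suspensions -/

/-- The relation generating the smash product. -/
def smashRel (X Y : PtSp) : (X.carrier × Y.carrier) → (X.carrier × Y.carrier) → Prop :=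
  fun a b => (a.1 = X.pt ∨ a.2 = Y.pt) ∧ b = (X.pt, Y.pt)

/-- The smash product `X ∧ Y = (X × Y)/(X ∨ Y)`. -/
def Smash (X Y : PtSp) : PtSp where
  carrier := Quotient (Relation.EqvGen.setoid (smashRel X Y))
  pt := Quotient.mk _ (X.pt, Y.pt)

/-- The smash product of two pointed maps. -/
def SmashMap {X X' Y Y' : PtSp} (f : PtMap X X') (g : PtMap Y Y') :
    PtMap (Smash X Y) (Smash X' Y') where
  toFun := Quotient.lift
    (fun p => (Quotient.mk _ (f.toFun p.1, g.toFun p.2) : (Smash X' Y').carrier))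
    (by
      intro a b h
      induction h with
      | rel a b hab =>
        obtain ⟨h1, h2⟩ := hab
        subst h2
        refine Quotient.sound (Relation.EqvGen.rel _ _ ⟨?_, by simp [f.map_pt, g.map_pt]⟩)
        rcases h1 with h1 | h1
        · exact Or.inl (by rw [h1, f.map_pt])
        · exact Or.inr (by rw [h1, g.map_pt])
      | refl a => rfl
      | symm _ _ _ ih => exact ih.symm
      | trans _ _ _ _ _ ih₁ ih₂ => exact ih₁.trans ih₂)
  continuous := by
    apply Continuous.quotient_lift
    exact continuous_quotient_mk'.comp
      ((f.continuous.comp continuous_fst).prodMk (g.continuous.comp continuous_snd))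
  map_pt := by
    show (Quotient.mk _ (f.toFun X.pt, g.toFun Y.pt) : (Smash X' Y').carrier) = _
    rw [f.map_pt, g.map_pt]; rfl

/-- The `n`-sphere, pointed. -/
def PtSphere (n : ℕ) : PtSp where
  carrier := Metric.sphere (0 : EuclideanSpace ℝ (Fin (n + 1))) 1
  pt := ⟨EuclideanSpace.single 0 1, by simp⟩

/-- The reduced suspension `ΣX = S¹ ∧ X`. -/
def Susp (X : PtSp) : PtSp := Smash (PtSphere 1) X

/-- suspension of a pointed map -/
def SuspMap {X Y : PtSp} (f : PtMap X Y) : PtMap (Susp X) (Susp Y) :=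
  SmashMap (PtMap.id (PtSphere 1)) f

/-- iterated reduced suspension -/
def SuspIter : ℕ → PtSp → PtSp
  | 0, X => X
  | n + 1, X => Susp (SuspIter n X)

/-- iterated suspension of a pointed map -/
def SuspIterMap {X Y : PtSp} : (ℓ : ℕ) → PtMap X Y → PtMap (SuspIter ℓ X) (SuspIter ℓ Y)
  | 0, f => f
  | n + 1, f => SuspMap (SuspIterMap n f)

/-- product of pointed spaces -/
def PtProd (X Y : PtSp) : PtSp where
  carrier := X.carrier × Y.carrier
  pt := (X.pt, Y.pt)

open Metric in
/-- A CW structure on a topological space `X`, in the classical sense (Hatcher, Appendix):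
a Hausdorff space together with characteristic maps from closed disks whose open cells
partition `X`, such that the boundary of each `n`-cell lies in finitely many cells of
dimension `< n`, and `X` carries the weak topology determined by the characteristic maps. -/
structure CWStruct (X : Type) [TopologicalSpace X] : Type 1 where
  /-- `X` is Hausdorff -/
  t2 : T2Space X
  /-- the index types of the `n`-cells -/
  cell : ℕ → Type
  /-- the characteristic map of each `n`-cell, defined on the closed unit disk `Dⁿ` -/
  char : ∀ n, cell n → C((closedBall (0 : EuclideanSpace ℝ (Fin n)) 1 :
    Set (EuclideanSpace ℝ (Fin n))), X)
  /-- each characteristic map is injective on the open disk -/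
  injOn : ∀ n (i : cell n), Set.InjOn (char n i) (Subtype.val ⁻¹' ball 0 1)
  /-- the open cells partition `X`: every point lies in exactly one open cell -/
  partition : ∀ x : X, ∃! p : Σ n, cell n,
    x ∈ char p.1 p.2 '' (Subtype.val ⁻¹' ball (0 : EuclideanSpace ℝ (Fin p.1)) 1)
  /-- the image of the boundary sphere of an `n`-cell is contained in the union of
  finitely many open cells of dimension `< n` -/
  boundary : ∀ n (i : cell n), ∃ F : Finset (Σ m, cell m), (∀ p ∈ F, p.1 < n) ∧
    char n i '' (Subtype.val ⁻¹' sphere (0 : EuclideanSpace ℝ (Fin n)) 1) ⊆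
      ⋃ p ∈ F, char p.1 p.2 '' (Subtype.val ⁻¹' ball (0 : EuclideanSpace ℝ (Fin p.1)) 1)
  /-- `X` has the weak topology: a set is closed as soon as its preimage under every
  characteristic map is closed -/
  weak : ∀ A : Set X, (∀ n (i : cell n), IsClosed (char n i ⁻¹' A)) → IsClosed A

variable {X : Type} [TopologicalSpace X]

/-- The `m`-skeleton `X^{(m)}` of a CW structure: the union of the (closed) cells of
dimension `≤ m`. -/
def CWStruct.sk (c : CWStruct X) (m : ℕ) : Set X :=
  ⋃ (n : ℕ) (_ : n ≤ m) (i : c.cell n), Set.range (c.char n i)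

lemma CWStruct.sk_mono (c : CWStruct X) {m m' : ℕ} (h : m ≤ m') : c.sk m ⊆ c.sk m' := by
  intro x hx
  simp only [CWStruct.sk, Set.mem_iUnion] at hx ⊢
  obtain ⟨n, hn, i, hi⟩ := hx
  exact ⟨n, hn.trans h, i, hi⟩

/-- A CW complex is finite if it has finitely many cells. -/
def CWStruct.IsFinite (c : CWStruct X) : Prop := Finite (Σ n, c.cell n)

/-- A subcomplex of a CW complex: a union of open cells which contains the closure of
each of its cells. -/
def CWStruct.IsSubcomplex (c : CWStruct X) (A : Set X) : Prop :=
  ∃ S : Set (Σ n, c.cell n),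
    A = (⋃ p ∈ S, c.char p.1 p.2 '' (Subtype.val ⁻¹' Metric.ball 0 1)) ∧
    ∀ p ∈ S, Set.range (c.char p.1 p.2) ⊆ A

/-! ## Pointed skeleta of a pointed CW complex -/

/-- The `m`-skeleton of a pointed CW complex, as a pointed space (the basepoint being a
`0`-cell, it lies in every skeleton). -/
def skPt (X : PtSp) (c : CWStruct X.carrier) (m : ℕ) (h : X.pt ∈ c.sk 0) : PtSp :=
  ⟨↥(c.sk m), ⟨X.pt, c.sk_mono (Nat.zero_le m) h⟩⟩

/-- The inclusion `X^{(m)} → X^{(m+1)}` of skeleta, as a pointed map. -/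
def skPtIncl (X : PtSp) (c : CWStruct X.carrier) (m : ℕ) (h : X.pt ∈ c.sk 0) :
    PtMap (skPt X c m h) (skPt X c (m + 1) h) :=
  ⟨Set.inclusion (c.sk_mono (Nat.le_succ m)), continuous_inclusion _, rfl⟩

/-- The inclusion `X^{(m)} → X` of a skeleton into the whole complex, as a pointed map. -/
def skPtToAll (X : PtSp) (c : CWStruct X.carrier) (m : ℕ) (h : X.pt ∈ c.sk 0) :
    PtMap (skPt X c m h) X :=
  ⟨Subtype.val, continuous_subtype_val, rfl⟩

/-! ## Pointed subspaces and quotients -/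

/-- A subset of a pointed space containing the basepoint, as a pointed space. -/
def ptSub (X : PtSp) (A : Set X.carrier) (h : X.pt ∈ A) : PtSp := ⟨↥A, ⟨X.pt, h⟩⟩

/-- The inclusion of a pointed subspace. -/
def ptSubIncl (X : PtSp) (A : Set X.carrier) (h : X.pt ∈ A) : PtMap (ptSub X A h) X :=
  ⟨Subtype.val, continuous_subtype_val, rfl⟩

/-- The quotient `X/A` collapsing `A ⊆ X` to a point, pointed at the image of the
basepoint. -/
def quotPt (X : PtSp) (A : Set X.carrier) : PtSp :=
  ⟨Quotient (Relation.EqvGen.setoid fun a b => a ∈ A ∧ b = X.pt), Quotient.mk _ X.pt⟩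

/-- The quotient map `X → X/A`. -/
def quotPtMk (X : PtSp) (A : Set X.carrier) : PtMap X (quotPt X A) :=
  ⟨Quotient.mk _, continuous_quotient_mk', rfl⟩

/-- The pointed map `X/A → X'/A'` induced by a map of pairs `f : (X, A) → (X', A')`. -/
def quotPtMap {X X' : PtSp} (f : PtMap X X') (A : Set X.carrier) (A' : Set X'.carrier)
    (hf : Set.MapsTo f.toFun A A') : PtMap (quotPt X A) (quotPt X' A') where
  toFun := Quotient.lift (fun x => (Quotient.mk _ (f.toFun x) : (quotPt X' A').carrier))
    (by
      intro a b hab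
      induction hab with
      | rel a b hr =>
        exact Quotient.sound (Relation.EqvGen.rel _ _ ⟨hf hr.1, by rw [hr.2, f.map_pt]⟩)
      | refl a => rfl
      | symm _ _ _ ih => exact ih.symm
      | trans _ _ _ _ _ ih1 ih2 => exact ih1.trans ih2)
  continuous := Continuous.quotient_lift (continuous_quotient_mk'.comp f.continuous) _
  map_pt := by
    show (Quotient.mk _ (f.toFun X.pt) : (quotPt X' A').carrier) = _
    rw [f.map_pt]; rfl

/-- The restriction `A → A'` of a map of pairs `f : (X, A) → (X', A')`. -/
def ptSubMap {X X' : PtSp} (f : PtMap X X') (A : Set X.carrier) (A' : Set X'.carrier)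
    (hf : Set.MapsTo f.toFun A A') (h : X.pt ∈ A) (h' : X'.pt ∈ A') :
    PtMap (ptSub X A h) (ptSub X' A' h') :=
  ⟨fun x => ⟨f.toFun x.1, hf x.2⟩,
    (f.continuous.comp continuous_subtype_val).subtype_mk _,
    Subtype.ext f.map_pt⟩

/-! ## Reduced homology theories on pointed CW complexes -/

/-- A reduced homology theory `(h_k)_{k ∈ ℤ}` on pointed CW complexes: a sequence of
functors to abelian groups sending pointed-homotopic maps to equal homomorphisms, together
with, for every CW pair `(X, A)` (a pointed CW complex `X` with a pointed subcomplex `A`),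
a boundary map `∂ : h_k(X/A) → h_{k-1}(A)` making the sequence
`h_k(A) → h_k(X) → h_k(X/A) → h_{k-1}(A) → h_{k-1}(X)` exact — where the first and last
maps are induced by the inclusion `A ⊆ X` and the middle map by the quotient map
`X → X/A` — naturally in the pair. -/
structure RedHomology where
  /-- the groups `h_k(X)` -/
  obj : ℤ → PtSp → AddCommGrpCat.{0}
  /-- the induced homomorphisms -/
  map : ∀ (k : ℤ) {A B : PtSp}, PtMap A B → (↥(obj k A) →+ ↥(obj k B))
  map_id : ∀ (k : ℤ) (A : PtSp), map k (PtMap.id A) = AddMonoidHom.id ↥(obj k A)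
  map_comp : ∀ (k : ℤ) {A B C : PtSp} (f : PtMap A B) (g : PtMap B C),
    map k (g.comp f) = (map k g).comp (map k f)
  htpy_inv : ∀ (k : ℤ) {A B : PtSp} (f g : PtMap A B), PtHomotopic f g → map k f = map k g
  /-- the boundary maps of CW pairs -/
  bd : ∀ (k : ℤ) (X : PtSp) (c : CWStruct X.carrier) (A : Set X.carrier),
    c.IsSubcomplex A → ∀ _ : X.pt ∈ A,
    ↥(obj k (quotPt X A)) →+ ↥(obj (k - 1) (ptSub X A ‹X.pt ∈ A›))
  exact_incl_quot : ∀ (k : ℤ) (X : PtSp) (c : CWStruct X.carrier) (A : Set X.carrier)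
    (hA : c.IsSubcomplex A) (hpt : X.pt ∈ A),
    Function.Exact (map k (ptSubIncl X A hpt)) (map k (quotPtMk X A))
  exact_quot_bd : ∀ (k : ℤ) (X : PtSp) (c : CWStruct X.carrier) (A : Set X.carrier)
    (hA : c.IsSubcomplex A) (hpt : X.pt ∈ A),
    Function.Exact (map k (quotPtMk X A)) (bd k X c A hA hpt)
  exact_bd_incl : ∀ (k : ℤ) (X : PtSp) (c : CWStruct X.carrier) (A : Set X.carrier)
    (hA : c.IsSubcomplex A) (hpt : X.pt ∈ A),
    Function.Exact (bd k X c A hA hpt) (map (k - 1) (ptSubIncl X A hpt))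
  /-- naturality of the boundary map in maps of CW pairs -/
  bd_natural : ∀ (k : ℤ) (X X' : PtSp) (c : CWStruct X.carrier) (c' : CWStruct X'.carrier)
    (A : Set X.carrier) (A' : Set X'.carrier) (hA : c.IsSubcomplex A)
    (hA' : c'.IsSubcomplex A') (hpt : X.pt ∈ A) (hpt' : X'.pt ∈ A')
    (f : PtMap X X') (hf : Set.MapsTo f.toFun A A'),
    (bd k X' c' A' hA' hpt').comp (map k (quotPtMap f A A' hf)) =
      (map (k - 1) (ptSubMap f A A' hf hpt hpt')).comp (bd k X c A hA hpt)

/-! Write `Y_m = X^{(m)}/X^{(n)}`. Since `Y_m → Y` factors through `Y_{m+1}`, one inclusion of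
kernels is automatic. Conversely, let `x ∈ h_k(Y_m)` die in `h_k(X/X^{(n)})`. The map of pairs
`(X^{(m)}, X^{(n)}) → (X, X^{(n)})` is a homeomorphism on `X^{(n)}`, so a chase through the two
long exact sequences lifts `x` to a class `y ∈ h_k(X^{(m)})` that dies in `h_k(X)`. By 1-step
stabilization of `X`, `y` already dies in `h_k(X^{(m+1)})`, hence `x` dies in `h_k(Y_{m+1})`. -/

lemma Metric.mem_ball_or_mem_sphere_of_mem_closedBall {α : Type*} [PseudoMetricSpace α]
    {x y : α} {r : ℝ} (hy : y ∈ closedBall x r) : y ∈ ball x r ∨ y ∈ sphere x r := by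
  rwa [← ball_union_sphere] at hy

namespace CWStruct

open Metric

variable (c : CWStruct X)

def openCell (p : Σ n, c.cell n) : Set X :=
  c.char p.1 p.2 '' (Subtype.val ⁻¹' ball 0 1)

lemma eq_of_mem_openCell {p q : Σ n, c.cell n} {x : X} (hp : x ∈ c.openCell p)
    (hq : x ∈ c.openCell q) : p = q :=
  (c.partition x).unique hp hq

lemma range_char_subset_sk {j m : ℕ} (hj : j ≤ m) (i : c.cell j) :
    Set.range (c.char j i) ⊆ c.sk m :=
  Set.subset_iUnion₂_of_subset j hj (Set.subset_iUnion (fun i => Set.range (c.char j i)) i)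

lemma openCell_subset_sk {p : Σ n, c.cell n} {m : ℕ} (hp : p.1 ≤ m) :
    c.openCell p ⊆ c.sk m :=
  (Set.image_subset_range _ _).trans (c.range_char_subset_sk hp p.2)

lemma exists_openCell_of_mem_range {j : ℕ} {i : c.cell j} {x : X}
    (hx : x ∈ Set.range (c.char j i)) : ∃ p : Σ n, c.cell n, p.1 ≤ j ∧ x ∈ c.openCell p := by
  obtain ⟨y, rfl⟩ := hx
  rcases mem_ball_or_mem_sphere_of_mem_closedBall y.2 with hy | hy
  · exact ⟨⟨j, i⟩, le_rfl, y, hy, rfl⟩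
  · obtain ⟨F, hF, hbd⟩ := c.boundary j i
    obtain ⟨p, hpF, hp⟩ := Set.mem_iUnion₂.1 (hbd ⟨y, hy, rfl⟩)
    exact ⟨p, (hF p hpF).le, hp⟩

lemma exists_openCell_of_mem_sk {m : ℕ} {x : X} (hx : x ∈ c.sk m) :
    ∃ p : Σ n, c.cell n, p.1 ≤ m ∧ x ∈ c.openCell p := by
  simp only [sk, Set.mem_iUnion] at hx
  obtain ⟨j, hj, i, hi⟩ := hx
  obtain ⟨p, hp, hx⟩ := c.exists_openCell_of_mem_range hi
  exact ⟨p, hp.trans hj, hx⟩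

lemma sk_eq_biUnion_openCell (m : ℕ) :
    c.sk m = ⋃ p ∈ {p : Σ n, c.cell n | p.1 ≤ m}, c.openCell p := by
  refine subset_antisymm (fun x hx => ?_) (Set.iUnion₂_subset fun p hp => c.openCell_subset_sk hp)
  obtain ⟨p, hp, hx⟩ := c.exists_openCell_of_mem_sk hx
  exact Set.mem_biUnion hp hx

lemma isSubcomplex_sk (m : ℕ) : c.IsSubcomplex (c.sk m) :=
  ⟨{p | p.1 ≤ m}, c.sk_eq_biUnion_openCell m, fun p hp => c.range_char_subset_sk hp p.2⟩

lemma disjoint_openCell_sk {p : Σ n, c.cell n} {m : ℕ} (hp : m < p.1) :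
    Disjoint (c.openCell p) (c.sk m) := by
  refine Set.disjoint_left.2 fun x hxp hxm => ?_
  obtain ⟨q, hq, hxq⟩ := c.exists_openCell_of_mem_sk hxm
  rw [c.eq_of_mem_openCell hxp hxq] at hp
  exact hq.not_gt hp

lemma isCompact_image_preimage_char {j : ℕ} (i : c.cell j) {S : Set X}
    (hS : IsClosed (c.char j i ⁻¹' S)) : IsCompact (c.char j i '' (c.char j i ⁻¹' S)) :=
  have : CompactSpace (closedBall (0 : EuclideanSpace ℝ (Fin j)) 1) :=
    isCompact_iff_compactSpace.1 (isCompact_closedBall _ _)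
  hS.isCompact.image (c.char j i).continuous

/-- By induction on the dimension: a cell of dimension `> m` meets `S ⊆ X^{(m)}` only along its
boundary sphere, which lies in finitely many lower-dimensional cells. -/
lemma isClosed_of_subset_sk {m : ℕ} {S : Set X} (hS : S ⊆ c.sk m)
    (hclosed : ∀ j ≤ m, ∀ i : c.cell j, IsClosed (c.char j i ⁻¹' S)) : IsClosed S := by
  have := c.t2
  refine c.weak S fun j => ?_
  induction j using Nat.strong_induction_on with
  | _ j ih =>
  intro i
  rcases le_or_gt j m with hj | hj
  · exact hclosed j hj i
  obtain ⟨F, hF, hbd⟩ := c.boundary j i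
  set B := ⋃ p ∈ F, c.char p.1 p.2 '' (c.char p.1 p.2 ⁻¹' S)
  have hB : IsClosed B := F.finite_toSet.isClosed_biUnion fun p hp =>
    (c.isCompact_image_preimage_char p.2 (ih p.1 (hF p hp) p.2)).isClosed
  have hpre : c.char j i ⁻¹' S = c.char j i ⁻¹' B ∩ Subtype.val ⁻¹' sphere 0 1 := by
    ext y
    refine ⟨fun hy => ?_, fun hy => ?_⟩
    · have hys : (y : EuclideanSpace ℝ (Fin j)) ∈ sphere 0 1 :=
        (mem_ball_or_mem_sphere_of_mem_closedBall y.2).resolve_left fun hyb =>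
          Set.disjoint_left.1 (c.disjoint_openCell_sk (p := ⟨j, i⟩) hj) ⟨y, hyb, rfl⟩ (hS hy)
      obtain ⟨p, hpF, z, -, hz⟩ := Set.mem_iUnion₂.1 (hbd ⟨y, hys, rfl⟩)
      exact ⟨Set.mem_biUnion hpF ⟨z, by rwa [Set.mem_preimage, hz], hz⟩, hys⟩
    · obtain ⟨p, -, z, hz, hzy⟩ := Set.mem_iUnion₂.1 hy.1
      rw [Set.mem_preimage, ← hzy]
      exact hz
  rw [hpre]
  exact (hB.preimage (c.char j i).continuous).inter
    (isClosed_sphere.preimage continuous_subtype_val)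

def skeletonCell (m j : ℕ) : Type := { _i : c.cell j // j ≤ m }

def skeletonChar (m j : ℕ) (i : c.skeletonCell m j) :
    C((closedBall (0 : EuclideanSpace ℝ (Fin j)) 1 : Set (EuclideanSpace ℝ (Fin j))),
      ↥(c.sk m)) :=
  ⟨fun y => ⟨c.char j i.1 y, c.range_char_subset_sk i.2 i.1 (Set.mem_range_self y)⟩,
    (c.char j i.1).continuous.subtype_mk _⟩

def skeletonCellEmb (m : ℕ) : (Σ j, c.skeletonCell m j) → Σ j, c.cell j :=
  fun p => ⟨p.1, p.2.1⟩

lemma skeletonCellEmb_injective (m : ℕ) : Function.Injective (c.skeletonCellEmb m) := by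
  rintro ⟨j, i, hj⟩ ⟨j', i', hj'⟩ h
  obtain ⟨rfl, h⟩ := Sigma.mk.inj_iff.1 h
  cases eq_of_heq h
  rfl

lemma mem_image_skeletonChar {m j : ℕ} (i : c.skeletonCell m j)
    (S : Set (EuclideanSpace ℝ (Fin j))) {x : ↥(c.sk m)} :
    x ∈ c.skeletonChar m j i '' (Subtype.val ⁻¹' S) ↔
      (x : X) ∈ c.char j i.1 '' (Subtype.val ⁻¹' S) :=
  ⟨fun ⟨y, hy, hyx⟩ => ⟨y, hy, congrArg Subtype.val hyx⟩,
    fun ⟨y, hy, hyx⟩ => ⟨y, hy, Subtype.ext hyx⟩⟩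

def skeleton (m : ℕ) : CWStruct ↥(c.sk m) where
  t2 := by have := c.t2; infer_instance
  cell := c.skeletonCell m
  char := c.skeletonChar m
  injOn j i _ hx _ hy hxy := c.injOn j i.1 hx hy (congrArg Subtype.val hxy)
  partition x := by
    obtain ⟨p, hp, hx⟩ := c.exists_openCell_of_mem_sk x.2
    refine ⟨⟨p.1, p.2, hp⟩, (c.mem_image_skeletonChar _ _).2 hx, fun q hq => ?_⟩
    exact c.skeletonCellEmb_injective m
      (c.eq_of_mem_openCell ((c.mem_image_skeletonChar _ _).1 hq) hx)
  boundary j i := by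
    obtain ⟨F, hF, hbd⟩ := c.boundary j i.1
    refine ⟨F.preimage (c.skeletonCellEmb m) (c.skeletonCellEmb_injective m).injOn,
      fun p hp => hF _ (Finset.mem_preimage.1 hp), ?_⟩
    intro x hx
    obtain ⟨p, hpF, hxp⟩ := Set.mem_iUnion₂.1 (hbd ((c.mem_image_skeletonChar _ _).1 hx))
    exact Set.mem_iUnion₂.2 ⟨⟨p.1, p.2, (hF p hpF).le.trans i.2⟩, Finset.mem_preimage.2 hpF,
      (c.mem_image_skeletonChar _ _).2 hxp⟩
  weak A hA := by
    have hA' : A = Subtype.val ⁻¹' (Subtype.val '' A) :=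
      (Set.preimage_image_eq A Subtype.val_injective).symm
    rw [hA'] at hA ⊢
    exact (c.isClosed_of_subset_sk (Set.image_val_subset)
      fun j hj i => hA j ⟨i, hj⟩).preimage continuous_subtype_val

lemma isSubcomplex_skeleton_sk {n m : ℕ} (hnm : n ≤ m) :
    (c.skeleton m).IsSubcomplex (Subtype.val ⁻¹' c.sk n) := by
  refine ⟨{p | p.1 ≤ n}, subset_antisymm (fun x hx => ?_) ?_, fun p hp => ?_⟩
  · obtain ⟨p, hp, hxp⟩ := c.exists_openCell_of_mem_sk hx
    exact Set.mem_biUnion (x := (⟨p.1, p.2, hp.trans hnm⟩ : Σ j, c.skeletonCell m j)) hp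
      ((c.mem_image_skeletonChar _ _).2 hxp)
  · exact Set.iUnion₂_subset fun p hp x hx =>
      c.openCell_subset_sk (p := c.skeletonCellEmb m p) hp ((c.mem_image_skeletonChar _ _).1 hx)
  · rintro _ ⟨y, rfl⟩
    exact c.range_char_subset_sk hp p.2.1 (Set.mem_range_self y)

end CWStruct

lemma quotPtMap_comp {X Y Z : PtSp} (f : PtMap X Y) (g : PtMap Y Z)
    (A : Set X.carrier) (B : Set Y.carrier) (C : Set Z.carrier)
    (hf : Set.MapsTo f.toFun A B) (hg : Set.MapsTo g.toFun B C) :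
    quotPtMap (g.comp f) A C (hg.comp hf) = (quotPtMap g B C hg).comp (quotPtMap f A B hf) := by
  ext x
  induction x using Quotient.ind
  rfl

lemma quotPtMap_comp_quotPtMk {X Y : PtSp} (f : PtMap X Y) (A : Set X.carrier)
    (B : Set Y.carrier) (hf : Set.MapsTo f.toFun A B) :
    (quotPtMap f A B hf).comp (quotPtMk X A) = (quotPtMk Y B).comp f :=
  rfl

lemma ptSubIncl_comp_ptSubMap {X Y : PtSp} (f : PtMap X Y) (A : Set X.carrier)
    (B : Set Y.carrier) (hf : Set.MapsTo f.toFun A B) (hA : X.pt ∈ A) (hB : Y.pt ∈ B) :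
    (ptSubIncl Y B hB).comp (ptSubMap f A B hf hA hB) = f.comp (ptSubIncl X A hA) :=
  rfl

/-- The inverse of the restriction of `C ↪ X` to the copy of `B ⊆ C` inside `C`. -/
def ptSubOfSubset (X : PtSp) {B C : Set X.carrier} (hBC : B ⊆ C) (hB : X.pt ∈ B)
    (hC : X.pt ∈ C) :
    PtMap (ptSub X B hB) (ptSub (ptSub X C hC) (Subtype.val ⁻¹' B) hB) :=
  ⟨fun x => ⟨⟨x.1, hBC x.2⟩, x.2⟩, (continuous_subtype_val.subtype_mk _).subtype_mk _, rfl⟩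

namespace RedHomology

variable (h : RedHomology)

lemma map_comp_apply (k : ℤ) {A B C : PtSp} (f : PtMap A B) (g : PtMap B C)
    (x : h.obj k A) : h.map k (g.comp f) x = h.map k g (h.map k f x) := by
  rw [h.map_comp]
  rfl

lemma map_map_of_comp_eq (k : ℤ) {A B B' C : PtSp} {f : PtMap A B} {g : PtMap B C}
    {f' : PtMap A B'} {g' : PtMap B' C} (e : g.comp f = g'.comp f') (x : h.obj k A) :
    h.map k g (h.map k f x) = h.map k g' (h.map k f' x) := by
  rw [← map_comp_apply, e, map_comp_apply]

lemma map_injective_of_comp_eq_id (k : ℤ) {A B : PtSp} {f : PtMap A B} {g : PtMap B A}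
    (e : g.comp f = PtMap.id A) : Function.Injective (h.map k f) :=
  Function.LeftInverse.injective (g := h.map k g) fun x => by
    rw [← map_comp_apply, e, h.map_id]
    rfl

lemma map_surjective_of_comp_eq_id (k : ℤ) {A B : PtSp} {f : PtMap A B} {g : PtMap B A}
    (e : f.comp g = PtMap.id B) : Function.Surjective (h.map k f) :=
  Function.RightInverse.surjective (g := h.map k g) fun x => by
    rw [← map_comp_apply, e, h.map_id]
    rfl

/-- `∂x = 0` by naturality of `∂`, so `x` lifts to some `y₀`; then `f y₀` comes from `h_k(A')`,
hence from `h_k(A)`, and subtracting that class from `y₀` gives `y`. -/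
theorem exists_lift_mem_ker_of_map_quotPtMap_eq_zero {X X' : PtSp} {c : CWStruct X.carrier}
    {c' : CWStruct X'.carrier} {A : Set X.carrier} {A' : Set X'.carrier}
    (hA : c.IsSubcomplex A) (hA' : c'.IsSubcomplex A') (hpt : X.pt ∈ A) (hpt' : X'.pt ∈ A')
    (f : PtMap X X') (hf : Set.MapsTo f.toFun A A') {k : ℤ}
    (hinj : Function.Injective (h.map (k - 1) (ptSubMap f A A' hf hpt hpt')))
    (hsurj : Function.Surjective (h.map k (ptSubMap f A A' hf hpt hpt')))
    {x : h.obj k (quotPt X A)} (hx : h.map k (quotPtMap f A A' hf) x = 0) :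
    ∃ y, h.map k f y = 0 ∧ h.map k (quotPtMk X A) y = x := by
  have hbd : h.bd k X c A hA hpt x = 0 := hinj <| by
    rw [map_zero, ← AddMonoidHom.comp_apply, ← h.bd_natural k X X' c c' A A' hA hA' hpt hpt' f hf,
      AddMonoidHom.comp_apply, hx, map_zero]
  obtain ⟨y₀, rfl⟩ := (h.exact_quot_bd k X c A hA hpt x).1 hbd
  have hfy₀ : h.map k (quotPtMk X' A') (h.map k f y₀) = 0 := by
    rw [← h.map_map_of_comp_eq k (quotPtMap_comp_quotPtMk f A A' hf), hx]
  obtain ⟨a', ha'⟩ := (h.exact_incl_quot k X' c' A' hA' hpt' _).1 hfy₀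
  obtain ⟨a, rfl⟩ := hsurj a'
  refine ⟨y₀ - h.map k (ptSubIncl X A hpt) a, ?_, ?_⟩
  · rw [map_sub, ← h.map_map_of_comp_eq k (ptSubIncl_comp_ptSubMap f A A' hf hpt hpt'), ha',
      sub_self]
  · rw [map_sub, (h.exact_incl_quot k X c A hA hpt).apply_apply_eq_zero, sub_zero]

end RedHomology

lemma quotPtMap_skPtToAll_eq_comp (X : PtSp) (c : CWStruct X.carrier) (m : ℕ)
    (hpt : X.pt ∈ c.sk 0) (A : Set X.carrier) :
    quotPtMap (skPtToAll X c m hpt) (Subtype.val ⁻¹' A) A (fun _ hx => hx) =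
      (quotPtMap (skPtToAll X c (m + 1) hpt) (Subtype.val ⁻¹' A) A fun _ hx => hx).comp
        (quotPtMap (skPtIncl X c m hpt) (Subtype.val ⁻¹' A) (Subtype.val ⁻¹' A) fun _ hx => hx) :=
  quotPtMap_comp (skPtIncl X c m hpt) (skPtToAll X c (m + 1) hpt) _ _ _ _ _

/-- Let `h` be a reduced homology theory on pointed CW complexes.
Suppose a pointed CW complex `X` has the 1-Step Stabilization property for `h`: for all
`k` and `m` the kernel of `h_k(X^{(m)}) → h_k(X^{(m+1)})` equals the kernel of
`h_k(X^{(m)}) → h_k(X)` (maps induced by the skeleton inclusions).  Then for every `n` the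
quotient complex `Y = X/X^{(n)}` — whose `m`-skeleton for `m ≥ n` is
`Y^{(m)} = X^{(m)}/X^{(n)}` — also has the 1-Step Stabilization property for `h`: for all
`k` and all `m ≥ n`, the kernel of `h_k(Y^{(m)}) → h_k(Y^{(m+1)})` (induced by the
inclusion of skeleta) equals the kernel of `h_k(Y^{(m)}) → h_k(Y)`. -/
theorem oneStep_quotient (h : RedHomology) (X : PtSp) (c : CWStruct X.carrier)
    (hpt : X.pt ∈ c.sk 0)
    (hyp : ∀ (k : ℤ) (m : ℕ),
      AddMonoidHom.ker (h.map k (skPtIncl X c m hpt)) =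
      AddMonoidHom.ker (h.map k (skPtToAll X c m hpt)))
    (n : ℕ) :
    ∀ (k : ℤ) (m : ℕ), n ≤ m →
      AddMonoidHom.ker (h.map k (quotPtMap (skPtIncl X c m hpt)
          (Subtype.val ⁻¹' c.sk n) (Subtype.val ⁻¹' c.sk n) fun _ hx => hx)) =
      AddMonoidHom.ker (h.map k (quotPtMap (skPtToAll X c m hpt)
          (Subtype.val ⁻¹' c.sk n) (c.sk n) fun _ hx => hx)) := by
  intro k m hnm
  have hptn : X.pt ∈ c.sk n := c.sk_mono (Nat.zero_le n) hpt
  ext x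
  constructor
  · intro hx
    rw [AddMonoidHom.mem_ker, quotPtMap_skPtToAll_eq_comp, h.map_comp_apply, hx, map_zero]
  · intro hx
    obtain ⟨y, hyX, rfl⟩ := h.exists_lift_mem_ker_of_map_quotPtMap_eq_zero (X := skPt X c m hpt)
      (c.isSubcomplex_skeleton_sk hnm) (c.isSubcomplex_sk n) hptn hptn (skPtToAll X c m hpt)
      (fun _ hx => hx)
      (h.map_injective_of_comp_eq_id _ (g := ptSubOfSubset X (c.sk_mono hnm) hptn _) rfl)
      (h.map_surjective_of_comp_eq_id _ (g := ptSubOfSubset X (c.sk_mono hnm) hptn _) rfl) hx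
    have hy : h.map k (skPtIncl X c m hpt) y = 0 := (hyp k m).ge hyX
    exact (h.map_map_of_comp_eq k (quotPtMap_comp_quotPtMk (skPtIncl X c m hpt) _ _ _) y).trans
      (by rw [hy, map_zero])
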